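/- There exist ε₀ > 0 and a₁ > 0 such that for every a ≥ a₁ and every τ ∈ [0,1], any solution (0, μ) of the slab problem P_{τ,a} with speed c = 0 satisfies ν(0) > ε₀. -/

import Mathlib

/-!
Integrating the equation over `θ`, the `θ`-diffusion term vanishes by the Neumann condition,
so for `c = 0` the weighted mass `W(ξ) = ∫ g_τ(θ) μ(ξ, θ) dθ` satisfies `-W'' = r ν (1 - ν)`.
As `θmin ν ≤ W ≤ θmax ν` and `ν ≥ 0`, `W` is concave wherever `W < θmin`. Since
`W(-a) ≥ θmin` and `W(a) = 0`, on the largest interval around `0` where `W < θmin` the function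
`W` lies above its chord, which gives `W(0) ≥ θmin / 2` and hence `ν(0) ≥ θmin / (2 θmax)`.
-/

open Set Filter MeasureTheory

/-- A solution of the slab problem `P_{τ,a}`: a nonnegative twice continuously
differentiable function solving the equation with diffusivity `g_τ(θ) = thmin + τ(θ - thmin)`
on `(-a, a) × (thmin, thmax)`, with Neumann conditions in `θ` and the prescribed
boundary values at `ξ = ±a`. -/
def IsSlabSolution (thmin thmax alpha r τ a c : ℝ) (μ : ℝ → ℝ → ℝ) : Prop :=
  (∀ ξ ∈ Set.Icc (-a) a, ∀ θ ∈ Set.Icc thmin thmax, 0 ≤ μ ξ θ) ∧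
  ContDiff ℝ 2 (Function.uncurry μ) ∧
  (∀ ξ ∈ Set.Ioo (-a) a, ∀ θ ∈ Set.Ioo thmin thmax,
    -(c * deriv (fun x => μ x θ) ξ)
      - (thmin + τ * (θ - thmin)) * iteratedDeriv 2 (fun x => μ x θ) ξ
      - alpha * iteratedDeriv 2 (fun t => μ ξ t) θ
      = r * μ ξ θ * (1 - ∫ t in Set.Ioo thmin thmax, μ ξ t)) ∧
  (∀ ξ ∈ Set.Ioo (-a) a,
    deriv (fun t => μ ξ t) thmin = 0 ∧ deriv (fun t => μ ξ t) thmax = 0) ∧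
  (∀ θ ∈ Set.Icc thmin thmax, μ (-a) θ = 1 / (thmax - thmin) ∧ μ a θ = 0)

lemma ConcaveOn.div_mul_add_div_mul_le {w : ℝ → ℝ} {s e x : ℝ}
    (hw : ConcaveOn ℝ (Icc s e) w) (hse : s < e) (hx : x ∈ Icc s e) :
    (e - x) / (e - s) * w s + (x - s) / (e - s) * w e ≤ w x := by
  have hes : 0 < e - s := by linarith
  have hsum : (e - x) / (e - s) + (x - s) / (e - s) = 1 := by field_simp; ring
  have hcomb : (e - x) / (e - s) * s + (x - s) / (e - s) * e = x := by field_simp; ring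
  have key := hw.2 (left_mem_Icc.2 hse.le) (right_mem_Icc.2 hse.le)
    (div_nonneg (sub_nonneg.2 hx.2) hes.le) (div_nonneg (sub_nonneg.2 hx.1) hes.le) hsum
  rwa [smul_eq_mul, smul_eq_mul, smul_eq_mul, smul_eq_mul, hcomb] at key

theorem chord_le_of_deriv2_nonpos_where_lt {w w' w'' : ℝ → ℝ} {l u x₀ m : ℝ}
    (hw : ∀ x, HasDerivAt w (w' x) x) (hw' : ∀ x, HasDerivAt w' (w'' x) x)
    (hw'' : ∀ x ∈ Ioo l u, w x < m → w'' x ≤ 0)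
    (hlx : l ≤ x₀) (hxu : x₀ ≤ u) (hm : 0 ≤ m) (hl : m ≤ w l) (hu : 0 ≤ w u) :
    (u - x₀) / (u - l) * m ≤ w x₀ := by
  have hratio : (u - x₀) / (u - l) ≤ 1 := div_le_one_of_le₀ (by linarith) (by linarith)
  by_cases hx₀ : m ≤ w x₀
  · nlinarith
  push Not at hx₀
  have hwc : Continuous w := continuous_iff_continuousAt.2 fun x => (hw x).continuousAt
  set L := Icc l x₀ ∩ {x | m ≤ w x}
  -- `u` is added so that `sInf R` is defined even if `w < m` on all of `[x₀, u]`.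
  set R := Icc x₀ u ∩ {x | m ≤ w x} ∪ {u}
  have hLc : IsClosed L := isClosed_Icc.inter (isClosed_le continuous_const hwc)
  have hRc : IsClosed R :=
    (isClosed_Icc.inter (isClosed_le continuous_const hwc)).union isClosed_singleton
  have hLb : BddAbove L := bddAbove_Icc.mono inter_subset_left
  have hRlb : x₀ ∈ lowerBounds R := by
    rintro x (hx | hx)
    exacts [hx.1.1, hx ▸ hxu]
  obtain ⟨⟨hls, hsx⟩, hs⟩ := hLc.csSup_mem ⟨l, ⟨le_rfl, hlx⟩, hl⟩ hLb
  have hR := hRc.csInf_mem ⟨u, Or.inr rfl⟩ ⟨x₀, hRlb⟩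
  have hsx : sSup L < x₀ := lt_of_le_of_ne hsx fun h => hx₀.not_ge (h ▸ hs)
  have hxe : x₀ ≤ sInf R := le_csInf ⟨u, Or.inr rfl⟩ hRlb
  have heu : sInf R ≤ u := csInf_le ⟨x₀, hRlb⟩ (Or.inr rfl)
  have hlt : ∀ x ∈ Ioo (sSup L) (sInf R), w x < m := by
    intro x hx
    by_contra! hmx
    rcases le_total x x₀ with h | h
    · exact notMem_of_csSup_lt hx.1 hLb ⟨⟨by linarith [hx.1], h⟩, hmx⟩
    · exact notMem_of_lt_csInf hx.2 ⟨x₀, hRlb⟩ (Or.inl ⟨⟨h, by linarith [hx.2]⟩, hmx⟩)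
  have hconc : ConcaveOn ℝ (Icc (sSup L) (sInf R)) w := by
    refine concaveOn_of_hasDerivWithinAt2_nonpos (convex_Icc _ _) hwc.continuousOn
      (fun x _ => (hw x).hasDerivWithinAt) (fun x _ => (hw' x).hasDerivWithinAt) fun x hx => ?_
    rw [interior_Icc] at hx
    exact hw'' x ⟨by linarith [hx.1], by linarith [hx.2]⟩ (hlt x hx)
  have hchord := hconc.div_mul_add_div_mul_le (hsx.trans_le hxe) ⟨hsx.le, hxe⟩
  set s := sSup L
  set e := sInf R
  have hse : 0 < e - s := by linarith
  have hwl : 0 ≤ (e - x₀) / (e - s) := div_nonneg (by linarith) hse.le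
  have hwr : 0 ≤ (x₀ - s) / (e - s) := div_nonneg (by linarith) hse.le
  rcases hR with ⟨-, he⟩ | he
  · have hsum : (e - x₀) / (e - s) + (x₀ - s) / (e - s) = 1 := by field_simp; ring
    nlinarith [mul_le_mul_of_nonneg_left hs hwl,
      mul_le_mul_of_nonneg_left (show m ≤ w e from he) hwr]
  · rw [show e = u from he] at hchord hwl hwr
    calc (u - x₀) / (u - l) * m ≤ (u - x₀) / (u - s) * m := by
          gcongr; linarith
      _ ≤ (u - x₀) / (u - s) * w s + (x₀ - s) / (u - s) * w u := by
          nlinarith [mul_le_mul_of_nonneg_left hs hwl, mul_nonneg hwr hu]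
      _ ≤ w x₀ := hchord

noncomputable def partialFst (F : ℝ × ℝ → ℝ) (z : ℝ × ℝ) : ℝ := fderiv ℝ F z (1, 0)

noncomputable def partialSnd (F : ℝ × ℝ → ℝ) (z : ℝ × ℝ) : ℝ := fderiv ℝ F z (0, 1)

section Partial

variable {F : ℝ × ℝ → ℝ}

theorem hasDerivAt_partialFst {x t : ℝ} (hF : DifferentiableAt ℝ F (x, t)) :
    HasDerivAt (fun y => F (y, t)) (partialFst F (x, t)) x :=
  hF.hasFDerivAt.comp_hasDerivAt x ((hasDerivAt_id x).prodMk (hasDerivAt_const x t))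

theorem hasDerivAt_partialSnd {x t : ℝ} (hF : DifferentiableAt ℝ F (x, t)) :
    HasDerivAt (fun y => F (x, y)) (partialSnd F (x, t)) t :=
  hF.hasFDerivAt.comp_hasDerivAt t ((hasDerivAt_const t x).prodMk (hasDerivAt_id t))

theorem ContDiff.partialFst {m n : WithTop ℕ∞} (hF : ContDiff ℝ n F) (hmn : m + 1 ≤ n) :
    ContDiff ℝ m (partialFst F) :=
  (hF.fderiv_right hmn).clm_apply contDiff_const

theorem ContDiff.partialSnd {m n : WithTop ℕ∞} (hF : ContDiff ℝ n F) (hmn : m + 1 ≤ n) :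
    ContDiff ℝ m (partialSnd F) :=
  (hF.fderiv_right hmn).clm_apply contDiff_const

theorem iteratedDeriv_two_eq_partialFst_partialFst (hF : ContDiff ℝ 2 F) (x t : ℝ) :
    iteratedDeriv 2 (fun y => F (y, t)) x = partialFst (partialFst F) (x, t) := by
  have hF1 : ContDiff ℝ 1 (partialFst F) := hF.partialFst le_rfl
  rw [iteratedDeriv_succ, iteratedDeriv_one]
  rw [show deriv (fun y => F (y, t)) = fun y => partialFst F (y, t) from
    funext fun y => (hasDerivAt_partialFst (hF.differentiable two_ne_zero _)).deriv]
  exact (hasDerivAt_partialFst (hF1.differentiable one_ne_zero _)).deriv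

theorem iteratedDeriv_two_eq_partialSnd_partialSnd (hF : ContDiff ℝ 2 F) (x t : ℝ) :
    iteratedDeriv 2 (fun y => F (x, y)) t = partialSnd (partialSnd F) (x, t) := by
  have hF1 : ContDiff ℝ 1 (partialSnd F) := hF.partialSnd le_rfl
  rw [iteratedDeriv_succ, iteratedDeriv_one]
  rw [show deriv (fun y => F (x, y)) = fun y => partialSnd F (x, y) from
    funext fun y => (hasDerivAt_partialSnd (hF.differentiable two_ne_zero _)).deriv]
  exact (hasDerivAt_partialSnd (hF1.differentiable one_ne_zero _)).deriv

theorem integral_Ioo_partialSnd (hF : ContDiff ℝ 1 F) {b c : ℝ} (hbc : b ≤ c) (x : ℝ) :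
    ∫ t in Ioo b c, partialSnd F (x, t) = F (x, c) - F (x, b) := by
  rw [← integral_Ioc_eq_integral_Ioo, ← intervalIntegral.integral_of_le hbc]
  exact intervalIntegral.integral_eq_sub_of_hasDerivAt
    (fun t _ => hasDerivAt_partialSnd (hF.differentiable one_ne_zero _))
    (((hF.partialSnd (m := 0) le_rfl).continuous.comp
      (Continuous.prodMk_right x)).intervalIntegrable _ _)

end Partial

theorem integrableOn_Ioo_of_continuous {F : ℝ × ℝ → ℝ} (hF : Continuous F) (x b c : ℝ) :
    IntegrableOn (fun t => F (x, t)) (Ioo b c) :=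
  ((hF.comp (Continuous.prodMk_right x)).integrableOn_Icc).mono_set Ioo_subset_Icc_self

theorem hasDerivAt_setIntegral_Ioo_of_continuous {F F' : ℝ × ℝ → ℝ} (hF : Continuous F)
    (hF' : Continuous F') (hd : ∀ x t, HasDerivAt (fun y => F (y, t)) (F' (x, t)) x)
    (b c x₀ : ℝ) :
    HasDerivAt (fun x => ∫ t in Ioo b c, F (x, t)) (∫ t in Ioo b c, F' (x₀, t)) x₀ := by
  obtain ⟨M, hM⟩ := (isCompact_closedBall x₀ 1 |>.prod (isCompact_Icc (a := b) (b := c)))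
    |>.exists_bound_of_continuousOn hF'.continuousOn
  refine (hasDerivAt_integral_of_dominated_loc_of_deriv_le (bound := fun _ => M)
    (Metric.ball_mem_nhds x₀ one_pos)
    (Eventually.of_forall fun x => (hF.comp (Continuous.prodMk_right x)).aestronglyMeasurable)
    (integrableOn_Ioo_of_continuous hF x₀ b c)
    (hF'.comp (Continuous.prodMk_right x₀)).aestronglyMeasurable ?_
    (integrableOn_const (by simp [Real.volume_Ioo]))
    (ae_of_all _ fun t x _ => hd x t)).2
  rw [ae_restrict_iff' measurableSet_Ioo]
  exact ae_of_all _ fun t ht x hx =>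
    hM (x, t) ⟨Metric.ball_subset_closedBall hx, Ioo_subset_Icc_self ht⟩

theorem hasDerivAt_integral_mul_partialFst {k : ℝ → ℝ} {F : ℝ × ℝ → ℝ} (hk : Continuous k)
    (hF : ContDiff ℝ 1 F) (b c x : ℝ) :
    HasDerivAt (fun x => ∫ t in Ioo b c, k t * F (x, t))
      (∫ t in Ioo b c, k t * partialFst F (x, t)) x :=
  hasDerivAt_setIntegral_Ioo_of_continuous (F := fun z => k z.2 * F z)
    (F' := fun z => k z.2 * partialFst F z) ((hk.comp continuous_snd).mul hF.continuous)
    ((hk.comp continuous_snd).mul (hF.partialFst (m := 0) le_rfl).continuous)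
    (fun _ t => (hasDerivAt_partialFst (hF.differentiable one_ne_zero _)).const_mul (k t))
    b c x

noncomputable def weightedMass (thmin thmax τ : ℝ) (μ : ℝ → ℝ → ℝ) (x : ℝ) : ℝ :=
  ∫ t in Ioo thmin thmax, (thmin + τ * (t - thmin)) * μ x t

section WeightedMass

variable {thmin thmax τ : ℝ} {μ : ℝ → ℝ → ℝ} {x : ℝ}

theorem mul_integral_le_weightedMass (hτ : 0 ≤ τ) (hμ : Continuous (Function.uncurry μ))
    (hx : ∀ t ∈ Ioo thmin thmax, 0 ≤ μ x t) :
    thmin * ∫ t in Ioo thmin thmax, μ x t ≤ weightedMass thmin thmax τ μ x := by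
  rw [← integral_const_mul]
  refine setIntegral_mono_on ((integrableOn_Ioo_of_continuous hμ x _ _).const_mul _)
    (integrableOn_Ioo_of_continuous (F := fun z => (thmin + τ * (z.2 - thmin)) * μ z.1 z.2)
      (by fun_prop) x _ _) measurableSet_Ioo fun t ht => ?_
  have : 0 ≤ τ * (t - thmin) := mul_nonneg hτ (by linarith [ht.1])
  exact mul_le_mul_of_nonneg_right (by linarith) (hx t ht)

theorem weightedMass_le_mul_integral (hτ : τ ≤ 1) (hμ : Continuous (Function.uncurry μ))
    (hx : ∀ t ∈ Ioo thmin thmax, 0 ≤ μ x t) :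
    weightedMass thmin thmax τ μ x ≤ thmax * ∫ t in Ioo thmin thmax, μ x t := by
  rw [← integral_const_mul]
  refine setIntegral_mono_on
    (integrableOn_Ioo_of_continuous (F := fun z => (thmin + τ * (z.2 - thmin)) * μ z.1 z.2)
      (by fun_prop) x _ _) ((integrableOn_Ioo_of_continuous hμ x _ _).const_mul _)
    measurableSet_Ioo fun t ht => ?_
  have : τ * (t - thmin) ≤ 1 * (t - thmin) := mul_le_mul_of_nonneg_right hτ (by linarith [ht.1])
  exact mul_le_mul_of_nonneg_right (by linarith [ht.2]) (hx t ht)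

end WeightedMass

namespace IsSlabSolution

variable {thmin thmax alpha r τ a : ℝ} {μ : ℝ → ℝ → ℝ}

theorem le_weightedMass_neg (h : IsSlabSolution thmin thmax alpha r τ a 0 μ)
    (hθ : thmin < thmax) (hτ : 0 ≤ τ) : thmin ≤ weightedMass thmin thmax τ μ (-a) := by
  have hbc : ∀ t ∈ Ioo thmin thmax, μ (-a) t = 1 / (thmax - thmin) :=
    fun t ht => (h.2.2.2.2 t (Ioo_subset_Icc_self ht)).1
  have hmass : ∫ t in Ioo thmin thmax, μ (-a) t = 1 := by
    rw [setIntegral_congr_fun measurableSet_Ioo hbc, setIntegral_const, measureReal_def,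
      Real.volume_Ioo, ENNReal.toReal_ofReal (by linarith), smul_eq_mul]
    field_simp [(by linarith : thmax - thmin ≠ 0)]
  have hpos : ∀ t ∈ Ioo thmin thmax, 0 ≤ μ (-a) t :=
    fun t ht => (hbc t ht).symm ▸ one_div_nonneg.2 (by linarith)
  simpa [hmass] using mul_integral_le_weightedMass hτ h.2.1.continuous hpos

theorem weightedMass_eq_zero (h : IsSlabSolution thmin thmax alpha r τ a 0 μ) :
    weightedMass thmin thmax τ μ a = 0 := by
  refine (setIntegral_congr_fun measurableSet_Ioo fun t ht => ?_).trans (integral_zero _ _)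
  simp [(h.2.2.2.2 t (Ioo_subset_Icc_self ht)).2]

theorem integral_mul_partialFst_partialFst (h : IsSlabSolution thmin thmax alpha r τ a 0 μ)
    (hθ : thmin ≤ thmax) {x : ℝ} (hx : x ∈ Ioo (-a) a) :
    ∫ t in Ioo thmin thmax,
        (thmin + τ * (t - thmin)) * partialFst (partialFst (Function.uncurry μ)) (x, t)
      = -(r * (1 - ∫ t in Ioo thmin thmax, μ x t) * ∫ t in Ioo thmin thmax, μ x t) := by
  obtain ⟨-, hC2, heq, hneu, -⟩ := h
  set ν := ∫ t in Ioo thmin thmax, μ x t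
  set F := Function.uncurry μ
  have hpointwise : ∀ t ∈ Ioo thmin thmax,
      (thmin + τ * (t - thmin)) * partialFst (partialFst F) (x, t)
        = -alpha * partialSnd (partialSnd F) (x, t) + -(r * (1 - ν)) * μ x t := by
    intro t ht
    have hξξ : iteratedDeriv 2 (fun y => μ y t) x = partialFst (partialFst F) (x, t) :=
      iteratedDeriv_two_eq_partialFst_partialFst hC2 x t
    have hθθ : iteratedDeriv 2 (fun y => μ x y) t = partialSnd (partialSnd F) (x, t) :=
      iteratedDeriv_two_eq_partialSnd_partialSnd hC2 x t
    have hpde := heq x hx t ht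
    rw [hξξ, hθθ] at hpde
    linear_combination -hpde
  have hneumann : ∫ t in Ioo thmin thmax, partialSnd (partialSnd F) (x, t) = 0 := by
    have hd : ∀ θ, deriv (fun t => μ x t) θ = partialSnd F (x, θ) :=
      fun θ => (hasDerivAt_partialSnd (hC2.differentiable two_ne_zero _)).deriv
    rw [integral_Ioo_partialSnd (hC2.partialSnd le_rfl) hθ, ← hd, ← hd, (hneu x hx).1,
      (hneu x hx).2, sub_zero]
  have hC0 : Continuous (partialSnd (partialSnd F)) :=
    ((hC2.partialSnd le_rfl).partialSnd (m := 0) le_rfl).continuous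
  have hμx : IntegrableOn (fun t => μ x t) (Ioo thmin thmax) :=
    integrableOn_Ioo_of_continuous hC2.continuous x _ _
  rw [setIntegral_congr_fun measurableSet_Ioo hpointwise,
    integral_add ((integrableOn_Ioo_of_continuous hC0 x _ _).const_mul _) (hμx.const_mul _),
    integral_const_mul, integral_const_mul, hneumann]
  ring

theorem integral_mul_partialFst_partialFst_nonpos
    (h : IsSlabSolution thmin thmax alpha r τ a 0 μ) (hth : 0 < thmin) (hθ : thmin ≤ thmax)
    (hτ : 0 ≤ τ) (hr : 0 ≤ r) {x : ℝ} (hx : x ∈ Ioo (-a) a)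
    (hW : weightedMass thmin thmax τ μ x < thmin) :
    ∫ t in Ioo thmin thmax,
        (thmin + τ * (t - thmin)) * partialFst (partialFst (Function.uncurry μ)) (x, t) ≤ 0 := by
  have hx' : ∀ t ∈ Ioo thmin thmax, 0 ≤ μ x t :=
    fun t ht => h.1 x (Ioo_subset_Icc_self hx) t (Ioo_subset_Icc_self ht)
  have hν : 0 ≤ ∫ t in Ioo thmin thmax, μ x t := setIntegral_nonneg measurableSet_Ioo hx'
  have hθν := (mul_integral_le_weightedMass hτ h.2.1.continuous hx').trans_lt hW
  rw [h.integral_mul_partialFst_partialFst hθ hx]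
  have hν1 : ∫ t in Ioo thmin thmax, μ x t < 1 := by nlinarith
  linarith [mul_nonneg (mul_nonneg hr (sub_nonneg.2 hν1.le)) hν]

end IsSlabSolution

theorem statement10_general (thmin thmax alpha r : ℝ)
    (hth : 0 < thmin) (hthth : thmin < thmax) (hr : 0 < r) :
    ∃ ε₀ > (0 : ℝ), ∃ a₁ > (0 : ℝ), ∀ a ≥ a₁, ∀ τ ∈ Set.Icc (0 : ℝ) 1,
      ∀ μ : ℝ → ℝ → ℝ, IsSlabSolution thmin thmax alpha r τ a 0 μ →
        ε₀ < ∫ t in Set.Ioo thmin thmax, μ 0 t := by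
  have hthmax : 0 < thmax := hth.trans hthth
  refine ⟨thmin / (4 * thmax), by positivity, 1, one_pos, fun a ha τ hτ μ hμ => ?_⟩
  have hC2 : ContDiff ℝ 2 (Function.uncurry μ) := hμ.2.1
  have hweight : Continuous fun t : ℝ => thmin + τ * (t - thmin) := by fun_prop
  have hchord := chord_le_of_deriv2_nonpos_where_lt (w := weightedMass thmin thmax τ μ)
    (l := -a) (u := a) (x₀ := 0)
    (fun x => hasDerivAt_integral_mul_partialFst hweight (hC2.of_le one_le_two) thmin thmax x)
    (fun x => hasDerivAt_integral_mul_partialFst hweight (hC2.partialFst le_rfl) thmin thmax x)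
    (fun x hx hW => hμ.integral_mul_partialFst_partialFst_nonpos hth hthth.le hτ.1 hr.le hx hW)
    (by linarith) (by linarith) hth.le (hμ.le_weightedMass_neg hthth hτ.1)
    hμ.weightedMass_eq_zero.ge
  have hupper := weightedMass_le_mul_integral hτ.2 hC2.continuous
    fun t ht => hμ.1 0 ⟨by linarith, by linarith⟩ t (Ioo_subset_Icc_self ht)
  have hhalf : thmin / 2 ≤ thmax * ∫ t in Ioo thmin thmax, μ 0 t :=
    calc thmin / 2 = (a - 0) / (a - -a) * thmin := by field_simp; ring
      _ ≤ weightedMass thmin thmax τ μ 0 := hchord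
      _ ≤ _ := hupper
  rw [div_lt_iff₀ (by positivity)]
  linarith

theorem statement10 (thmin thmax alpha r : ℝ)
    (hth : 0 < thmin) (hthth : thmin < thmax) (halpha : 0 < alpha) (hr : 0 < r) :
    ∃ ε₀ > (0 : ℝ), ∃ a₁ > (0 : ℝ), ∀ a ≥ a₁, ∀ τ ∈ Set.Icc (0 : ℝ) 1,
      ∀ μ : ℝ → ℝ → ℝ, IsSlabSolution thmin thmax alpha r τ a 0 μ →
        ε₀ < ∫ t in Set.Ioo thmin thmax, μ 0 t :=
  statement10_general thmin thmax alpha r hth hthth hr
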